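/- arXiv:2311.07081 — 3 statements merged into one kernel-verified Lean document; each statement's English description precedes it below -/
import Mathlib

section
/- Let T ∈ ℂ^{N_T×N_T} be a nonzero Hermitian positive semidefinite matrix, let ρ > 0, and let N_S be a positive integer with N_S ≥ rank(T). Then there exists a unique δ ≥ 0 satisfying the fixed-point equation δ = (1/N_S)·tr(T·(I_{N_T} + (ρ/(1+ρδ))·T)^{-1}), and this δ is strictly positive. -/
open Matrix
open scoped ComplexOrder

/-!
After diagonalising `T`, the right-hand side of the fixed-point equation becomes
`F δ = N_S⁻¹ ∑ᵢ λᵢ (1 + ρδ) / (1 + ρδ + ρλᵢ)`, which is continuous and bounded on `δ ≥ 0`.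
It is strictly subhomogeneous, `a F(b) < b F(a)` for `0 ≤ a < b`: for each `λᵢ > 0` the
cross-multiplied difference is `λᵢ (b - a) ((1 + ρa)(1 + ρb) + ρλᵢ) > 0`. Taking `a = 0` gives
`F 0 > 0`, so the intermediate value theorem yields a fixed point, every fixed point is positive,
and two fixed points `a < b` would give `a b < b a`.
-/

def FixedPointEq {n : ℕ} (T : Matrix (Fin n) (Fin n) ℂ) (ρ : ℝ) (NS : ℕ) (δ : ℝ) : Prop :=
  (δ : ℂ) = (NS : ℂ)⁻¹ * (T * (1 + ((ρ / (1 + ρ * δ) : ℝ) : ℂ) • T)⁻¹).trace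

namespace Matrix.IsHermitian

variable {𝕜 n : Type*} [RCLike 𝕜] [Fintype n] [DecidableEq n] {A : Matrix n n 𝕜}

lemma trace_cfc (hA : A.IsHermitian) (f : ℝ → ℝ) :
    (cfc f A).trace = ∑ i, (f (hA.eigenvalues i) : 𝕜) := by
  rw [hA.cfc_eq, IsHermitian.cfc, Unitary.conjStarAlgAut_apply, trace_mul_cycle,
    Unitary.coe_star_mul_self, one_mul, trace_diagonal]
  rfl

lemma mul_inv_one_add_smul_eq_cfc (hA : A.IsHermitian) {c : ℝ}
    (hc : ∀ i, 1 + c * hA.eigenvalues i ≠ 0) :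
    A * (1 + (c : 𝕜) • A)⁻¹ = cfc (fun x ↦ x / (1 + c * x)) A := by
  have hspec : ∀ x ∈ spectrum ℝ A, 1 + c * x ≠ 0 := by
    rw [hA.spectrum_real_eq_range_eigenvalues]
    rintro - ⟨i, rfl⟩
    exact hc i
  have hA' : IsSelfAdjoint A := hA
  have hsum : 1 + (c : 𝕜) • A = cfc (fun x ↦ 1 + c * x) A := by
    rw [cfc_const_add 1 (c * ·) A, cfc_const_mul_id c A, map_one,
      RCLike.real_smul_eq_coe_smul (K := 𝕜)]
  rw [hsum, nonsing_inv_eq_ringInverse, ← cfc_inv _ _ hspec]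
  conv_lhs => arg 1; rw [← cfc_id' ℝ A]
  rw [← cfc_mul (fun x ↦ x) (fun x ↦ (1 + c * x)⁻¹) A
    (hg := (A.finite_real_spectrum).continuousOn _)]
  rfl

end Matrix.IsHermitian

open Function Set

section Subhomogeneous

variable {f : ℝ → ℝ}
  (hsub : ∀ a b, 0 ≤ a → a < b → a * f b < b * f a)
include hsub

lemma apply_zero_pos_of_mul_lt : 0 < f 0 := by
  simpa using hsub 0 1 le_rfl one_pos

lemma pos_of_isFixedPt_of_mul_lt {x : ℝ} (hx : 0 ≤ x) (hfix : IsFixedPt f x) : 0 < x :=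
  hx.lt_of_ne fun h ↦ (apply_zero_pos_of_mul_lt hsub).ne' (h ▸ hfix)

lemma existsUnique_nonneg_isFixedPt_of_mul_lt (hf : ContinuousOn f (Ici 0)) {S : ℝ}
    (hS : ∀ x, 0 ≤ x → f x ≤ S) : ∃! x, 0 ≤ x ∧ IsFixedPt f x := by
  have hf0 := apply_zero_pos_of_mul_lt hsub
  have hS0 : 0 ≤ S := hf0.le.trans (hS 0 le_rfl)
  obtain ⟨x, hx, hfix⟩ :=
    exists_mem_Icc_isFixedPt (hf.mono Icc_subset_Ici_self) hS0 hf0.le (hS S hS0)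
  have le_of_isFixedPt : ∀ a b, 0 ≤ b → IsFixedPt f a → IsFixedPt f b → a ≤ b :=
    fun a b hb hfa hfb ↦ not_lt.mp fun hba ↦ by
      simpa [hfa.eq, hfb.eq, mul_comm] using hsub b a hb hba
  exact ⟨x, ⟨hx.1, hfix⟩, fun y ⟨hy, hyfix⟩ ↦
    le_antisymm (le_of_isFixedPt y x hx.1 hyfix hfix) (le_of_isFixedPt x y hy hfix hyfix)⟩

end Subhomogeneous

noncomputable def fixedPointMap {ι : Type*} [Fintype ι] (lam : ι → ℝ) (ρ : ℝ) (NS : ℕ) (δ : ℝ) :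
    ℝ :=
  (NS : ℝ)⁻¹ * ∑ i, lam i * (1 + ρ * δ) / (1 + ρ * δ + ρ * lam i)

lemma mul_fixedPointMap_term_lt {ρ l a b : ℝ} (hρ : 0 ≤ ρ) (hl : 0 < l) (ha : 0 ≤ a)
    (hab : a < b) :
    a * (l * (1 + ρ * b) / (1 + ρ * b + ρ * l)) < b * (l * (1 + ρ * a) / (1 + ρ * a + ρ * l)) := by
  have hb : 0 ≤ b := ha.trans hab.le
  rw [mul_div_assoc', mul_div_assoc', div_lt_div_iff₀ (by positivity) (by positivity)]
  have hgap : 0 < l * (b - a) * ((1 + ρ * a) * (1 + ρ * b) + ρ * l) := by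
    have := sub_pos.mpr hab
    positivity
  linear_combination hgap

section FixedPointMap

variable {ι : Type*} [Fintype ι] {lam : ι → ℝ} {ρ : ℝ} (NS : ℕ)
  (hlam : ∀ i, 0 ≤ lam i) (hρ : 0 ≤ ρ)
include hlam hρ

lemma continuousOn_fixedPointMap : ContinuousOn (fixedPointMap lam ρ NS) (Ici 0) := by
  refine continuousOn_const.mul (continuousOn_finsetSum _ fun i _ ↦ ?_)
  refine ContinuousOn.div (by fun_prop) (by fun_prop) fun δ (hδ : 0 ≤ δ) ↦ ?_
  have := hlam i
  positivity

lemma fixedPointMap_le {δ : ℝ} (hδ : 0 ≤ δ) :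
    fixedPointMap lam ρ NS δ ≤ (NS : ℝ)⁻¹ * ∑ i, lam i := by
  refine mul_le_mul_of_nonneg_left (Finset.sum_le_sum fun i _ ↦ ?_) (by positivity)
  have := hlam i
  rw [div_le_iff₀ (by positivity)]
  nlinarith [mul_nonneg hρ this]

lemma mul_fixedPointMap_lt (hNS : 0 < NS) (hpos : ∃ i, 0 < lam i) {a b : ℝ} (ha : 0 ≤ a)
    (hab : a < b) : a * fixedPointMap lam ρ NS b < b * fixedPointMap lam ρ NS a := by
  obtain ⟨j, hj⟩ := hpos
  unfold fixedPointMap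
  rw [mul_left_comm a, mul_left_comm b]
  refine mul_lt_mul_of_pos_left ?_ (by simpa using hNS)
  rw [Finset.mul_sum, Finset.mul_sum]
  refine Finset.sum_lt_sum (fun i _ ↦ ?_) ⟨j, Finset.mem_univ j, ?_⟩
  · rcases (hlam i).eq_or_lt with hi | hi
    · simp [← hi]
    · exact (mul_fixedPointMap_term_lt hρ hi ha hab).le
  · exact mul_fixedPointMap_term_lt hρ hj ha hab

end FixedPointMap

lemma Matrix.PosSemidef.exists_eigenvalues_pos {𝕜 n : Type*} [RCLike 𝕜] [Fintype n]
    [DecidableEq n] {A : Matrix n n 𝕜} (hA : A.PosSemidef) (hA0 : A ≠ 0) :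
    ∃ i, 0 < hA.1.eigenvalues i := by
  obtain ⟨i, hi⟩ := Function.ne_iff.mp (hA.1.eigenvalues_eq_zero_iff.not.mpr hA0)
  exact ⟨i, (hA.eigenvalues_nonneg i).lt_of_ne' hi⟩

lemma fixedPointEq_iff {n : ℕ} {T : Matrix (Fin n) (Fin n) ℂ} (hT : T.PosSemidef) {ρ : ℝ}
    (hρ : 0 ≤ ρ) (NS : ℕ) {δ : ℝ} (hδ : 0 ≤ δ) :
    FixedPointEq T ρ NS δ ↔ IsFixedPt (fixedPointMap hT.1.eigenvalues ρ NS) δ := by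
  have hδ' : 0 < 1 + ρ * δ := by positivity
  have hterm : ∀ i, hT.1.eigenvalues i / (1 + ρ / (1 + ρ * δ) * hT.1.eigenvalues i) =
      hT.1.eigenvalues i * (1 + ρ * δ) / (1 + ρ * δ + ρ * hT.1.eigenvalues i) := fun i ↦ by
    have := hT.eigenvalues_nonneg i
    field_simp
  have hpos : ∀ i, 1 + ρ / (1 + ρ * δ) * hT.1.eigenvalues i ≠ 0 := fun i ↦ by
    have := hT.eigenvalues_nonneg i
    positivity
  have hcfc : T * (1 + ((ρ / (1 + ρ * δ) : ℝ) : ℂ) • T)⁻¹ =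
      cfc (fun x ↦ x / (1 + ρ / (1 + ρ * δ) * x)) T :=
    hT.1.mul_inv_one_add_smul_eq_cfc hpos
  unfold FixedPointEq
  rw [hcfc, hT.1.trace_cfc, IsFixedPt, fixedPointMap, eq_comm]
  simp only [hterm, RCLike.ofReal_eq_complex_ofReal, ← Complex.ofReal_natCast,
    ← Complex.ofReal_inv, ← Complex.ofReal_sum, ← Complex.ofReal_mul, Complex.ofReal_inj]

theorem fixedPoint_existsUnique_pos_general {NT : ℕ} (T : Matrix (Fin NT) (Fin NT) ℂ)
    (hT : T.PosSemidef) (hT0 : T ≠ 0) (ρ : ℝ) (hρ : 0 < ρ)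
    (NS : ℕ) (hNS1 : 1 ≤ NS) :
    (∃! δ : ℝ, 0 ≤ δ ∧ FixedPointEq T ρ NS δ) ∧
      ∀ δ : ℝ, 0 ≤ δ → FixedPointEq T ρ NS δ → 0 < δ := by
  have hlam := hT.eigenvalues_nonneg
  have hsub : ∀ a b, 0 ≤ a → a < b → a * fixedPointMap hT.1.eigenvalues ρ NS b <
      b * fixedPointMap hT.1.eigenvalues ρ NS a := fun a b ↦
    mul_fixedPointMap_lt NS hlam hρ.le hNS1 (hT.exists_eigenvalues_pos hT0)
  have hiff := fun δ ↦ fixedPointEq_iff hT hρ.le NS (δ := δ)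
  obtain ⟨δ, ⟨hδ, hfix⟩, huniq⟩ := existsUnique_nonneg_isFixedPt_of_mul_lt hsub
    (continuousOn_fixedPointMap NS hlam hρ.le) (fun _ ↦ fixedPointMap_le NS hlam hρ.le)
  refine ⟨⟨δ, ⟨hδ, (hiff δ hδ).2 hfix⟩, fun y hy ↦ huniq y ⟨hy.1, (hiff y hy.1).1 hy.2⟩⟩,
    fun y hy hfix ↦ pos_of_isFixedPt_of_mul_lt hsub hy ((hiff y hy).1 hfix)⟩

/-- **Existence, uniqueness and positivity of the fixed point** (paper, eq. (7)). -/
theorem fixedPoint_existsUnique_pos {NT : ℕ} (T : Matrix (Fin NT) (Fin NT) ℂ)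
    (hT : T.PosSemidef) (hT0 : T ≠ 0) (ρ : ℝ) (hρ : 0 < ρ)
    (NS : ℕ) (hNS1 : 1 ≤ NS) (hNSr : T.rank ≤ NS) :
    (∃! δ : ℝ, 0 ≤ δ ∧ FixedPointEq T ρ NS δ) ∧
      ∀ δ : ℝ, 0 ≤ δ → FixedPointEq T ρ NS δ → 0 < δ :=
  fixedPoint_existsUnique_pos_general T hT hT0 ρ hρ NS hNS1
end

section
/- Let T ∈ ℂ^{N_T×N_T} be Hermitian positive semidefinite with rank r, let ρ > 0, let N_S ≥ 1 be an integer, and let δ ≥ 0 satisfy the fixed-point equation δ = (1/N_S)·tr(T·(I_{N_T} + (ρ/(1+ρδ))·T)^{-1}). Then ρ·N_S·δ ≤ r·(1 + ρδ); consequently, if N_S > r then δ ≤ r/(ρ·(N_S − r)). -/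
/-!
Diagonalising `T`, the trace in the fixed-point equation is `∑ λᵢ / (1 + c λᵢ)` with
`c = ρ / (1 + ρδ)`. Each summand vanishes when `λᵢ = 0` and is below its limit `1 / c`
otherwise, so the sum is at most `rank T / c = rank T · (1 + ρδ) / ρ`.
-/

open Matrix
open scoped ComplexOrder

lemma div_one_add_mul_le_inv {x c : ℝ} (hx : 0 ≤ x) (hc : 0 < c) : x / (1 + c * x) ≤ c⁻¹ := by
  rw [div_le_iff₀ (by positivity), mul_add, inv_mul_cancel_left₀ hc.ne']
  linarith [inv_pos.2 hc]

namespace Matrix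

variable {n 𝕜 : Type*} [RCLike 𝕜] [Fintype n] [DecidableEq n] {A : Matrix n n 𝕜}

lemma IsHermitian.trace_cfc_s7 (hA : A.IsHermitian) (f : ℝ → ℝ) :
    (cfc f A).trace = ∑ i, (f (hA.eigenvalues i) : 𝕜) := by
  rw [hA.cfc_eq, IsHermitian.cfc, Unitary.conjStarAlgAut_apply, trace_mul_cycle,
    Unitary.coe_star_mul_self, one_mul, trace_diagonal]
  rfl

lemma IsHermitian.mul_inv_one_add_smul_eq_cfc_s7 (hA : A.IsHermitian) {c : ℝ}
    (hc : ∀ i, 1 + c * hA.eigenvalues i ≠ 0) :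
    A * (1 + c • A)⁻¹ = cfc (fun x ↦ x / (1 + c * x)) A := by
  have hspec : ∀ x ∈ spectrum ℝ A, 1 + c * x ≠ 0 := by
    rw [hA.spectrum_real_eq_range_eigenvalues]
    rintro - ⟨i, rfl⟩
    exact hc i
  have hcont (f : ℝ → ℝ) : ContinuousOn f (spectrum ℝ A) := A.finite_real_spectrum.continuousOn f
  have hlin : cfc (fun x ↦ 1 + c * x) A = 1 + c • A := by
    rw [cfc_add _ _ _ (hcont _) (hcont _), cfc_const_one ℝ A, cfc_const_mul_id c A]
  simp_rw [div_eq_mul_inv]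
  rw [cfc_mul _ _ _ (hcont _) (hcont _), cfc_inv _ _ hspec (hcont _), hlin, cfc_id' ℝ A,
    nonsing_inv_eq_ringInverse]

open Finset in
lemma PosSemidef.sum_eigenvalues_div_one_add_mul_le (hA : A.PosSemidef) {c : ℝ} (hc : 0 < c) :
    ∑ i, hA.1.eigenvalues i / (1 + c * hA.1.eigenvalues i) ≤ A.rank / c := by
  calc ∑ i, hA.1.eigenvalues i / (1 + c * hA.1.eigenvalues i)
      = ∑ i with hA.1.eigenvalues i ≠ 0, hA.1.eigenvalues i / (1 + c * hA.1.eigenvalues i) :=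
        (sum_filter_of_ne fun _ _ ↦ mt fun h0 ↦ by rw [h0, zero_div]).symm
    _ ≤ #{i | hA.1.eigenvalues i ≠ 0} • c⁻¹ :=
        sum_le_card_nsmul _ _ _ fun i _ ↦ div_one_add_mul_le_inv (hA.eigenvalues_nonneg i) hc
    _ = A.rank / c := by
        rw [hA.1.rank_eq_card_non_zero_eigs, Fintype.card_subtype, nsmul_eq_mul, div_eq_mul_inv]

end Matrix

theorem fixedPoint_bound_general {NT : ℕ} (T : Matrix (Fin NT) (Fin NT) ℂ) (hT : T.PosSemidef)
    (ρ : ℝ) (hρ : 0 < ρ) (NS : ℕ)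
    (δ : ℝ) (hδ : 0 ≤ δ) (hfix : FixedPointEq T ρ NS δ) :
    ρ * NS * δ ≤ (T.rank : ℝ) * (1 + ρ * δ) ∧
      (T.rank < NS → δ ≤ (T.rank : ℝ) / (ρ * ((NS : ℝ) - (T.rank : ℝ)))) := by
  rw [FixedPointEq] at hfix
  set c := ρ / (1 + ρ * δ)
  have hc : 0 < c := by positivity
  have hδ_eq : δ = (NS : ℝ)⁻¹ * ∑ i, hT.1.eigenvalues i / (1 + c * hT.1.eigenvalues i) := by
    rw [Complex.coe_smul, hT.1.mul_inv_one_add_smul_eq_cfc_s7 fun i ↦ by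
      have := hT.eigenvalues_nonneg i; positivity, hT.1.trace_cfc_s7] at hfix
    exact Complex.ofReal_injective (by push_cast at hfix ⊢; exact hfix)
  have hNSδ : NS * δ ≤ T.rank / c := by
    rcases eq_or_ne (NS : ℝ) 0 with hNS | hNS
    · rw [hNS, zero_mul]
      positivity
    · rw [hδ_eq, mul_inv_cancel_left₀ hNS]
      exact hT.sum_eigenvalues_div_one_add_mul_le hc
  have hmain : ρ * NS * δ ≤ T.rank * (1 + ρ * δ) :=
    calc ρ * NS * δ = ρ * (NS * δ) := by ring
      _ ≤ ρ * (T.rank / c) := by gcongr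
      _ = T.rank * (1 + ρ * δ) := by simp only [c]; field_simp
  refine ⟨hmain, fun hlt ↦ ?_⟩
  have hlt' : (T.rank : ℝ) < NS := by exact_mod_cast hlt
  rw [le_div_iff₀ (mul_pos hρ (by linarith))]
  linear_combination hmain

/-- **Bound on the fixed point** (intermediate step (22) in the proof of Proposition 2):
`ρ·N_S·δ ≤ r·(1 + ρδ)`, hence `δ ≤ r/(ρ(N_S − r))` when `N_S > r = rank T`. -/
theorem fixedPoint_bound {NT : ℕ} (T : Matrix (Fin NT) (Fin NT) ℂ) (hT : T.PosSemidef)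
    (ρ : ℝ) (hρ : 0 < ρ) (NS : ℕ) (hNS : 1 ≤ NS)
    (δ : ℝ) (hδ : 0 ≤ δ) (hfix : FixedPointEq T ρ NS δ) :
    ρ * NS * δ ≤ (T.rank : ℝ) * (1 + ρ * δ) ∧
      (T.rank < NS → δ ≤ (T.rank : ℝ) / (ρ * ((NS : ℝ) - (T.rank : ℝ)))) :=
  fixedPoint_bound_general T hT ρ hρ NS δ hδ hfix
end

section
/- Let R ∈ ℂ^{N_T×N_T} be Hermitian positive semidefinite with positive semidefinite square root R^{1/2}, let ρ > 0, let K and N_S be positive integers, and for F ∈ ℂ^{N_T×K} set T(F) = R^{1/2} F F^H R^{1/2}. Let F₀ ∈ ℂ^{N_T×K} and suppose δ : ℂ^{N_T×K} → ℝ (with ℂ^{N_T×K} viewed as a real vector space) is Fréchet differentiable at F₀, takes nonnegative values, and satisfies δ(F) = (1/N_S)·tr(T(F)·(I_{N_T} + (ρ/(1+ρδ(F)))·T(F))^{-1}) for all F in a neighborhood of F₀. Set α = ρ/(1+ρδ(F₀)), T = T(F₀), M = (I_{N_T} + α·T)^{-1}, and assume N_S > rank(T) or more generally d := N_S − α²·tr((T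 M)²) ≠ 0 (note tr((TM)²) is real since TM is Hermitian). Then for every direction E ∈ ℂ^{N_T×K}, the derivative of δ at F₀ in direction E equals Dδ(F₀)[E] = 2·Re tr(E^H · G), where G = (1/d)·R^{1/2} M² R^{1/2} F₀. Equivalently, the conjugate (Wirtinger) gradient of δ with respect to F is R^{1/2}(I + αT)^{-2}R^{1/2}F₀ / (N_S − α²·tr((T(I+αT)^{-1})²)). -/
open Matrix
open scoped ComplexOrder Matrix.Norms.L2Operator

/-!
Restrict `δ` to the line `t ↦ F₀ + t • E`, so that `δ' = D E`. Differentiating the fixed-point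
equation at `t = 0` with `(N⁻¹)' = -N⁻¹ N' N⁻¹` for `N = 1 + α • T` gives
`N_S δ' = tr (T' M²) + α² δ' tr ((T M)²)`, where `T' = R^{1/2} (E F₀ᴴ + F₀ Eᴴ) R^{1/2}`; the
identity `M - α M T M = M²` is what merges the two terms containing `T'`. This is linear in `δ'`
with coefficient `d`, and `Re tr (T' M²) = 2 Re tr (Eᴴ R^{1/2} M² R^{1/2} F₀)` because `M` and
`R^{1/2}` are Hermitian.
-/

theorem smul_mul_mul_eq_sub_mul_self {R A : Type*} [CommSemiring R] [Ring A] [Algebra R A]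
    {M T : A} {c : R} (hM : M * (1 + c • T) = 1) : c • (M * T * M) = M - M * M := by
  have hMT : c • (M * T) = 1 - M := by
    rw [mul_add, mul_one, mul_smul_comm] at hM
    rw [← hM, add_sub_cancel_left]
  rw [← smul_mul_assoc, hMT, sub_mul, one_mul]

theorem Matrix.IsHermitian.re_trace_conjTranspose_mul {n : Type*} [Fintype n]
    {S : Matrix n n ℂ} (hS : S.IsHermitian) (X : Matrix n n ℂ) :
    (Xᴴ * S).trace.re = (X * S).trace.re := by
  rw [← hS.eq, ← conjTranspose_mul, trace_conjTranspose, Complex.star_def, Complex.conj_re,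
    hS.eq, trace_mul_comm]

theorem Matrix.IsHermitian.re_trace_symm_mul {n k : Type*} [Fintype n] [Fintype k]
    {P S : Matrix n n ℂ} (hP : P.IsHermitian) (hS : S.IsHermitian) (F E : Matrix n k ℂ) :
    ((P * E * Fᴴ * P + P * F * Eᴴ * P) * S).trace.re = 2 * (Eᴴ * (P * S * P * F)).trace.re := by
  have hadj : (P * F * Eᴴ * P)ᴴ = P * E * Fᴴ * P := by
    simp only [conjTranspose_mul, conjTranspose_conjTranspose, hP.eq, Matrix.mul_assoc]
  have hcycle : (P * F * Eᴴ * P * S).trace = (Eᴴ * (P * S * P * F)).trace := by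
    rw [Matrix.mul_assoc (P * F), Matrix.mul_assoc, trace_mul_comm]
    simp only [Matrix.mul_assoc]
  rw [Matrix.add_mul, trace_add, Complex.add_re, ← hadj, hS.re_trace_conjTranspose_mul, hcycle]
  ring

theorem Matrix.IsHermitian.posSemidef_mul_mul_conjTranspose_mul {n k : Type*} [Fintype n] [Fintype k]
    {P : Matrix n n ℂ} (hP : P.IsHermitian) (F : Matrix n k ℂ) : (P * F * Fᴴ * P).PosSemidef := by
  simpa only [conjTranspose_mul, hP.eq, Matrix.mul_assoc] using
    posSemidef_self_mul_conjTranspose (P * F)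

theorem Matrix.PosSemidef.posDef_one_add_smul {n : Type*} [Fintype n] [DecidableEq n]
    {T : Matrix n n ℂ} (hT : T.PosSemidef) {a : ℝ} (ha : 0 ≤ a) : (1 + (a : ℂ) • T).PosDef :=
  PosDef.one.add_posSemidef (hT.smul (by exact_mod_cast ha))

theorem hasDerivAt_div_one_add_mul (ρ : ℝ) {s : ℝ} (h : 1 + ρ * s ≠ 0) :
    HasDerivAt (fun s => ρ / (1 + ρ * s)) (-(ρ / (1 + ρ * s)) ^ 2) s := by
  refine ((hasDerivAt_const s ρ).div (((hasDerivAt_id' s).const_mul ρ).const_add 1) h).congr_deriv ?_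
  field_simp
  ring

section MatrixDerivatives

variable {n : Type*} [Fintype n] [DecidableEq n]

theorem HasDerivAt.matrix_inv {N : ℝ → Matrix n n ℂ} {N' : Matrix n n ℂ} {t : ℝ}
    (hN : HasDerivAt N N' t) (hdet : IsUnit (N t).det) :
    HasDerivAt (fun s => (N s)⁻¹) (-((N t)⁻¹ * N' * (N t)⁻¹)) t := by
  obtain ⟨u, hu⟩ := (isUnit_iff_isUnit_det _).mpr hdet
  have hinv : (N t)⁻¹ = ↑u⁻¹ := by rw [nonsing_inv_eq_ringInverse, ← hu, Ring.inverse_unit]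
  simp only [hinv, nonsing_inv_eq_ringInverse]
  exact (hasFDerivAt_ringInverse (𝕜 := ℝ) u).comp_hasDerivAt_of_eq t hN hu

theorem HasDerivAt.matrix_trace {A : ℝ → Matrix n n ℂ} {A' : Matrix n n ℂ} {t : ℝ}
    (hA : HasDerivAt A A' t) : HasDerivAt (fun s => (A s).trace) A'.trace t :=
  ((traceLinearMap n ℝ ℂ).toContinuousLinearMap.hasFDerivAt).comp_hasDerivAt t hA

theorem HasDerivAt.trace_mul_inv_one_add_smul {A : ℝ → Matrix n n ℂ} {c : ℝ → ℂ}
    {A' : Matrix n n ℂ} {c' : ℂ} {t : ℝ}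
    (hA : HasDerivAt A A' t) (hc : HasDerivAt c c' t) (hdet : IsUnit (1 + c t • A t).det) :
    HasDerivAt (fun s => (A s * (1 + c s • A s)⁻¹).trace)
      ((A' * ((1 + c t • A t)⁻¹ * (1 + c t • A t)⁻¹)).trace
        - c' * ((A t * (1 + c t • A t)⁻¹) * (A t * (1 + c t • A t)⁻¹)).trace) t := by
  have hkey : c t • ((1 + c t • A t)⁻¹ * A t * (1 + c t • A t)⁻¹) =
      (1 + c t • A t)⁻¹ - (1 + c t • A t)⁻¹ * (1 + c t • A t)⁻¹ :=
    smul_mul_mul_eq_sub_mul_self (nonsing_inv_mul _ hdet)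
  have hN : HasDerivAt (fun s => 1 + c s • A s) (c t • A' + c' • A t) t := (hc.smul hA).const_add 1
  refine (hA.mul (hN.matrix_inv hdet)).matrix_trace.congr_deriv ?_
  set M := (1 + c t • A t)⁻¹
  calc _ = (A' * M).trace - (A' * (c t • (M * A t * M))).trace
        - c' * (A t * M * (A t * M)).trace := by
        simp only [Matrix.mul_neg, Matrix.mul_add, Matrix.add_mul, Matrix.smul_mul,
          Matrix.mul_smul, trace_add, trace_neg, trace_smul, smul_eq_mul, Matrix.mul_assoc]
        rw [trace_mul_cycle' (A t), Matrix.mul_assoc]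
        ring
    _ = _ := by rw [hkey, Matrix.mul_sub, trace_sub]; ring

theorem hasDerivAt_mul_mul_conjTranspose_mul {k : Type*} [Fintype k]
    (P Q : Matrix n n ℂ) (F E : Matrix n k ℂ) :
    HasDerivAt (fun t : ℝ => P * (F + t • E) * (F + t • E)ᴴ * Q)
      (P * E * Fᴴ * Q + P * F * Eᴴ * Q) 0 := by
  have hexp : (fun t : ℝ => P * (F + t • E) * (F + t • E)ᴴ * Q) = fun t =>
      P * F * Fᴴ * Q + (t • (P * E * Fᴴ * Q + P * F * Eᴴ * Q) + t ^ 2 • (P * E * Eᴴ * Q)) := by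
    ext1 t
    simp only [conjTranspose_add, conjTranspose_smul, Matrix.mul_add, Matrix.add_mul,
      Matrix.smul_mul, Matrix.mul_smul, smul_add, smul_smul]
    module
  rw [hexp]
  exact ((((hasDerivAt_id' (0:ℝ)).smul_const (P * E * Fᴴ * Q + P * F * Eᴴ * Q)).add
    ((hasDerivAt_pow 2 (0:ℝ)).smul_const (P * E * Eᴴ * Q))).const_add (P * F * Fᴴ * Q)).congr_deriv
    (by simp)

end MatrixDerivatives

theorem fixedPoint_gradient_general {NT K : ℕ}
    (Rhalf : Matrix (Fin NT) (Fin NT) ℂ)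
    (hRhalf : Rhalf.PosSemidef)
    (ρ : ℝ) (hρ : 0 < ρ) (NS : ℕ) (hNS : 1 ≤ NS)
    (δ : Matrix (Fin NT) (Fin K) ℂ → ℝ) (hpos : ∀ F, 0 ≤ δ F)
    (F₀ : Matrix (Fin NT) (Fin K) ℂ)
    (D : Matrix (Fin NT) (Fin K) ℂ →L[ℝ] ℝ) (hD : HasFDerivAt δ D F₀)
    (hfix : ∀ᶠ F in nhds F₀,
      ((δ F : ℝ) : ℂ) = (NS : ℂ)⁻¹ *
        ((Rhalf * F * Fᴴ * Rhalf) *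
          (1 + ((ρ / (1 + ρ * δ F) : ℝ) : ℂ) • (Rhalf * F * Fᴴ * Rhalf))⁻¹).trace)
    (α : ℝ) (hα : α = ρ / (1 + ρ * δ F₀))
    (T Mm : Matrix (Fin NT) (Fin NT) ℂ)
    (hTdef : T = Rhalf * F₀ * F₀ᴴ * Rhalf)
    (hMdef : Mm = (1 + ((α : ℝ) : ℂ) • T)⁻¹)
    (d : ℝ) (hd : d = (NS : ℝ) - α ^ 2 * (((T * Mm) * (T * Mm)).trace).re)
    (hd0 : d ≠ 0) :
    ∀ E : Matrix (Fin NT) (Fin K) ℂ,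
      D E = 2 * ((Eᴴ * (((d⁻¹ : ℝ) : ℂ) • (Rhalf * (Mm * Mm) * Rhalf * F₀))).trace).re := by
  intro E
  have hδ₀ := hpos F₀
  have hden : 1 + ρ * δ F₀ ≠ 0 := by positivity
  have hα₀ : 0 ≤ α := by rw [hα]; positivity
  have hTpsd : T.PosSemidef := hTdef ▸ hRhalf.isHermitian.posSemidef_mul_mul_conjTranspose_mul F₀
  have hNpd := hTpsd.posDef_one_add_smul hα₀
  have hMM : (Mm * Mm).IsHermitian := by
    rw [IsHermitian, conjTranspose_mul, hMdef, hNpd.isHermitian.inv.eq]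
  have hline : HasDerivAt (fun t : ℝ => δ (F₀ + t • E)) (D E) 0 := hD.hasLineDerivAt E
  have hc : HasDerivAt (fun t : ℝ => ((ρ / (1 + ρ * δ (F₀ + t • E)) : ℝ) : ℂ))
      ((-(α ^ 2) * D E : ℝ) : ℂ) 0 := by
    have h := (hasDerivAt_div_one_add_mul ρ hden).comp_of_eq 0 hline (by simp)
    rw [← hα] at h
    exact h.ofReal_comp
  have hΦ := ((hasDerivAt_mul_mul_conjTranspose_mul Rhalf Rhalf F₀ E).trace_mul_inv_one_add_smul
    hc (by simpa only [zero_smul, add_zero, ← hα, ← hTdef] using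
      (isUnit_iff_isUnit_det _).mp hNpd.isUnit)).const_mul (NS : ℂ)⁻¹
  simp only [zero_smul, add_zero, ← hα, ← hTdef, ← hMdef] at hΦ
  have hfix_line :=
    (Continuous.tendsto' (f := fun t : ℝ => F₀ + t • E) (by fun_prop) 0 F₀ (by simp)).eventually hfix
  have hre := congrArg Complex.re (hline.ofReal_comp.unique (hΦ.congr_of_eventuallyEq hfix_line))
  rw [Complex.ofReal_re, ← Complex.ofReal_natCast, ← Complex.ofReal_inv, Complex.re_ofReal_mul,
    Complex.sub_re, Complex.re_ofReal_mul, hRhalf.isHermitian.re_trace_symm_mul hMM] at hre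
  have hNS₀ : (NS : ℝ) ≠ 0 := Nat.cast_ne_zero.mpr (by omega)
  rw [Matrix.mul_smul, trace_smul, smul_eq_mul, Complex.re_ofReal_mul]
  field_simp at hre ⊢
  rw [hd]
  linear_combination hre

/-- **Proposition 3 of the paper**: the (Wirtinger) gradient of the implicitly defined
fixed-point solution `δ(F)` with respect to the precoder `F`. If `δ` is Fréchet
differentiable at `F₀` (over ℝ) and satisfies the fixed-point equation
`δ(F) = (1/N_S)·tr(T(F)(I + (ρ/(1+ρδ(F)))T(F))⁻¹)` near `F₀`, with
`T(F) = R^{1/2} F Fᴴ R^{1/2}`, then for every direction `E`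
`Dδ(F₀)[E] = 2·Re tr(Eᴴ G)` with `G = (1/d)·R^{1/2} M² R^{1/2} F₀`,
`M = (I + αT)⁻¹`, `α = ρ/(1+ρδ(F₀))` and `d = N_S − α²·tr((TM)²)`. -/
theorem fixedPoint_gradient {NT K : ℕ}
    (R Rhalf : Matrix (Fin NT) (Fin NT) ℂ)
    (hR : R.PosSemidef) (hRhalf : Rhalf.PosSemidef) (hsq : Rhalf * Rhalf = R)
    (ρ : ℝ) (hρ : 0 < ρ) (NS : ℕ) (hNS : 1 ≤ NS)
    (δ : Matrix (Fin NT) (Fin K) ℂ → ℝ) (hpos : ∀ F, 0 ≤ δ F)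
    (F₀ : Matrix (Fin NT) (Fin K) ℂ)
    (D : Matrix (Fin NT) (Fin K) ℂ →L[ℝ] ℝ) (hD : HasFDerivAt δ D F₀)
    (hfix : ∀ᶠ F in nhds F₀,
      ((δ F : ℝ) : ℂ) = (NS : ℂ)⁻¹ *
        ((Rhalf * F * Fᴴ * Rhalf) *
          (1 + ((ρ / (1 + ρ * δ F) : ℝ) : ℂ) • (Rhalf * F * Fᴴ * Rhalf))⁻¹).trace)
    (α : ℝ) (hα : α = ρ / (1 + ρ * δ F₀))
    (T Mm : Matrix (Fin NT) (Fin NT) ℂ)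
    (hTdef : T = Rhalf * F₀ * F₀ᴴ * Rhalf)
    (hMdef : Mm = (1 + ((α : ℝ) : ℂ) • T)⁻¹)
    (d : ℝ) (hd : d = (NS : ℝ) - α ^ 2 * (((T * Mm) * (T * Mm)).trace).re)
    (hd0 : d ≠ 0) :
    ∀ E : Matrix (Fin NT) (Fin K) ℂ,
      D E = 2 * ((Eᴴ * (((d⁻¹ : ℝ) : ℂ) • (Rhalf * (Mm * Mm) * Rhalf * F₀))).trace).re :=
  fixedPoint_gradient_general Rhalf hRhalf ρ hρ NS hNS δ hpos F₀ D hD hfix α hα T Mm hTdef hMdef d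
    hd hd0
end
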